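/- arXiv:1308.6670 — 7 statements merged into one kernel-verified Lean document; each statement's English description precedes it below -/
import Mathlib

section
/- An arithmetical function f : ℕ → ℂ not identically zero is semimultiplicative if and only if there exists a positive integer a such that f(a) ≠ 0, f(n) = 0 whenever a does not divide n, and f(a)·f(a·m·n) = f(a·m)·f(a·n) whenever gcd(m,n) = 1. -/
/-!
The data of a semimultiplicative representation are forced: `c = f a` and `g k = f (a * k) / f a`.
With these choices the identity `f a * f (a * m * n) = f (a * m) * f (a * n)` is exactly the
multiplicativity of `g`.
-/

/-- `f` is multiplicative: `f 1 = 1` and `f (m*n) = f m * f n` for coprime positive `m, n`. -/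
def IsMult (f : ℕ → ℂ) : Prop :=
  f 1 = 1 ∧ ∀ m n : ℕ, 0 < m → 0 < n → Nat.Coprime m n → f (m * n) = f m * f n

/-- `f` is semimultiplicative: `f n = c * g (n / a)` for a nonzero constant `c`,
a positive integer `a` and a multiplicative `g`, the value being `0` when `a ∤ n`. -/
def IsSemiMult (f : ℕ → ℂ) : Prop :=
  ∃ (c : ℂ) (a : ℕ) (g : ℕ → ℂ), c ≠ 0 ∧ 0 < a ∧ IsMult g ∧
    ∀ n : ℕ, 0 < n → f n = c * (if a ∣ n then g (n / a) else 0)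

section Representation

variable {f g : ℕ → ℂ} {c : ℂ} {a : ℕ}

lemma apply_mul_of_eq_mul_ite (ha : 0 < a)
    (hfc : ∀ n : ℕ, 0 < n → f n = c * (if a ∣ n then g (n / a) else 0)) {k : ℕ} (hk : 0 < k) :
    f (a * k) = c * g k := by
  rw [hfc (a * k) (Nat.mul_pos ha hk), if_pos (dvd_mul_right a k), Nat.mul_div_cancel_left _ ha]

lemma IsSemiMult.exists_base (hf : IsSemiMult f) :
    ∃ a : ℕ, 0 < a ∧ f a ≠ 0 ∧
      (∀ n : ℕ, 0 < n → ¬ a ∣ n → f n = 0) ∧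
      (∀ m n : ℕ, 0 < m → 0 < n → Nat.Coprime m n →
        f a * f (a * m * n) = f (a * m) * f (a * n)) := by
  obtain ⟨c, a, g, hc, ha, ⟨hg1, hgmul⟩, hfc⟩ := hf
  have hfa : f a = c := by
    simpa [hg1] using apply_mul_of_eq_mul_ite ha hfc one_pos
  refine ⟨a, ha, hfa ▸ hc, fun n hn hnd => by rw [hfc n hn, if_neg hnd, mul_zero], ?_⟩
  intro m n hm hn hmn
  rw [hfa, mul_assoc, apply_mul_of_eq_mul_ite ha hfc (Nat.mul_pos hm hn),
    apply_mul_of_eq_mul_ite ha hfc hm, apply_mul_of_eq_mul_ite ha hfc hn, hgmul m n hm hn hmn]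
  ring

lemma isMult_div_apply_base (hfa : f a ≠ 0)
    (hmul : ∀ m n : ℕ, 0 < m → 0 < n → Nat.Coprime m n →
      f a * f (a * m * n) = f (a * m) * f (a * n)) :
    IsMult fun k => f (a * k) / f a := by
  refine ⟨by simp [hfa], fun m n hm hn hmn => ?_⟩
  field_simp
  rw [← mul_assoc]
  linear_combination hmul m n hm hn hmn

lemma isSemiMult_of_base (ha : 0 < a) (hfa : f a ≠ 0)
    (hzero : ∀ n : ℕ, 0 < n → ¬ a ∣ n → f n = 0)
    (hmul : ∀ m n : ℕ, 0 < m → 0 < n → Nat.Coprime m n →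
      f a * f (a * m * n) = f (a * m) * f (a * n)) :
    IsSemiMult f := by
  refine ⟨f a, a, _, hfa, ha, isMult_div_apply_base hfa hmul, fun n hn => ?_⟩
  split_ifs with hd
  · obtain ⟨k, rfl⟩ := hd
    rw [Nat.mul_div_cancel_left _ ha, mul_div_cancel₀ _ hfa]
  · rw [mul_zero, hzero n hn hd]

end Representation

theorem semimult_iff_general (f : ℕ → ℂ) :
    IsSemiMult f ↔ ∃ a : ℕ, 0 < a ∧ f a ≠ 0 ∧
      (∀ n : ℕ, 0 < n → ¬ a ∣ n → f n = 0) ∧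
      (∀ m n : ℕ, 0 < m → 0 < n → Nat.Coprime m n →
        f a * f (a * m * n) = f (a * m) * f (a * n)) :=
  ⟨IsSemiMult.exists_base, fun ⟨_, ha, hfa, hzero, hmul⟩ => isSemiMult_of_base ha hfa hzero hmul⟩

theorem semimult_iff (f : ℕ → ℂ) (hf : ∃ n : ℕ, 0 < n ∧ f n ≠ 0) :
    IsSemiMult f ↔ ∃ a : ℕ, 0 < a ∧ f a ≠ 0 ∧
      (∀ n : ℕ, 0 < n → ¬ a ∣ n → f n = 0) ∧
      (∀ m n : ℕ, 0 < m → 0 < n → Nat.Coprime m n →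
        f a * f (a * m * n) = f (a * m) * f (a * n)) :=
  semimult_iff_general f
end

section
/- The Dirichlet convolution of two semimultiplicative arithmetical functions is semimultiplicative. -/
/-- Dirichlet convolution. -/
noncomputable def dirichlet (f h : ℕ → ℂ) : ℕ → ℂ :=
  fun n => ∑ d ∈ n.divisors, f d * h (n / d)

namespace ArithmeticFunction

variable {R : Type*}

/-- Forgets the value at `0`, which neither `IsSemiMult` nor `dirichlet` reads. -/
def ofFun [Zero R] (f : ℕ → R) : ArithmeticFunction R :=
  ⟨fun n => if n = 0 then 0 else f n, if_pos rfl⟩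

theorem ofFun_apply_of_ne_zero [Zero R] (f : ℕ → R) {n : ℕ} (hn : n ≠ 0) : ofFun f n = f n :=
  if_neg hn

theorem ofFun_eq_iff [Zero R] {f : ℕ → R} {F : ArithmeticFunction R} :
    ofFun f = F ↔ ∀ n, 0 < n → f n = F n := by
  refine ⟨fun h n hn => ?_, fun h => ext fun n => ?_⟩
  · rw [← h, ofFun_apply_of_ne_zero f hn.ne']
  · rcases Nat.eq_zero_or_pos n with rfl | hn
    · simp [ofFun]
    · rw [ofFun_apply_of_ne_zero f hn.ne', h n hn]

@[simp]
theorem ofFun_coe [Zero R] (F : ArithmeticFunction R) : ofFun ⇑F = F :=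
  ofFun_eq_iff.mpr fun _ _ => rfl

theorem ofFun_mul_apply [Semiring R] (f g : ℕ → R) (n : ℕ) :
    (ofFun f * ofFun g) n = ∑ d ∈ n.divisors, f d * g (n / d) := by
  rw [mul_apply, Nat.sum_divisorsAntidiagonal fun x y => ofFun f x * ofFun g y]
  refine Finset.sum_congr rfl fun d hd => ?_
  have hd₀ := Nat.pos_of_mem_divisors hd
  rw [ofFun_apply_of_ne_zero f hd₀.ne',
    ofFun_apply_of_ne_zero g (Nat.div_pos (Nat.divisor_le hd) hd₀).ne']

def single [Zero R] (a : ℕ) (c : R) : ArithmeticFunction R :=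
  ofFun (Pi.single a c)

theorem single_mul_apply [Semiring R] (a : ℕ) (c : R) (g : ArithmeticFunction R) (n : ℕ) :
    (single a c * g) n = if a ∣ n then c * g (n / a) else 0 := by
  rcases Nat.eq_zero_or_pos n with rfl | hn
  · simp
  rw [← ofFun_coe g, single, ofFun_mul_apply]
  simp only [Pi.single_apply, ite_mul, zero_mul, Finset.sum_ite_eq', Nat.mem_divisors,
    hn.ne', ne_eq, not_false_eq_true, and_true, ofFun_coe]

theorem single_mul_single [Semiring R] (a b : ℕ) (c d : R) :
    single a c * single b d = single (a * b) (c * d) := by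
  ext n
  rw [single_mul_apply]
  split_ifs with han
  · obtain ⟨m, rfl⟩ := han
    rcases Nat.eq_zero_or_pos a with rfl | ha
    · simp [single, ofFun]
    simp [single, ofFun, Pi.single_apply, ha.ne', Nat.mul_div_cancel_left m ha]
  · have hn : n ≠ 0 := by rintro rfl; exact han (dvd_zero a)
    have hnab : n ≠ a * b := by rintro rfl; exact han (dvd_mul_right a b)
    simp [single, ofFun, Pi.single_apply, hn, hnab]

end ArithmeticFunction

open ArithmeticFunction

theorem ofFun_dirichlet (f h : ℕ → ℂ) : ofFun (dirichlet f h) = ofFun f * ofFun h :=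
  ofFun_eq_iff.mpr fun n _ => (ofFun_mul_apply f h n).symm

theorem IsMult.isMultiplicative_ofFun {g : ℕ → ℂ} (hg : IsMult g) :
    (ofFun g).IsMultiplicative := by
  refine IsMultiplicative.iff_ne_zero.mpr ⟨?_, fun {m n} hm hn hmn => ?_⟩
  · rw [ofFun_apply_of_ne_zero g one_ne_zero, hg.1]
  · rw [ofFun_apply_of_ne_zero g (mul_ne_zero hm hn), ofFun_apply_of_ne_zero g hm,
      ofFun_apply_of_ne_zero g hn, hg.2 m n (Nat.pos_of_ne_zero hm) (Nat.pos_of_ne_zero hn) hmn]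

theorem ArithmeticFunction.IsMultiplicative.isMult {G : ArithmeticFunction ℂ}
    (hG : G.IsMultiplicative) : IsMult G :=
  ⟨hG.map_one, fun _ _ _ _ hmn => hG.map_mul_of_coprime hmn⟩

theorem isSemiMult_iff {f : ℕ → ℂ} :
    IsSemiMult f ↔ ∃ (c : ℂ) (a : ℕ) (G : ArithmeticFunction ℂ),
      c ≠ 0 ∧ 0 < a ∧ G.IsMultiplicative ∧ ofFun f = single a c * G := by
  constructor
  · rintro ⟨c, a, g, hc, ha, hg, hfg⟩
    refine ⟨c, a, ofFun g, hc, ha, hg.isMultiplicative_ofFun, ofFun_eq_iff.mpr fun n hn => ?_⟩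
    rw [hfg n hn, single_mul_apply, mul_ite, mul_zero]
    split_ifs with han
    · rw [ofFun_apply_of_ne_zero g (Nat.div_pos (Nat.le_of_dvd hn han) ha).ne']
    · rfl
  · rintro ⟨c, a, G, hc, ha, hG, hfG⟩
    refine ⟨c, a, G, hc, ha, hG.isMult, fun n hn => ?_⟩
    rw [ofFun_eq_iff.mp hfG n hn, single_mul_apply, mul_ite, mul_zero]

theorem semimult_dirichlet (f h : ℕ → ℂ) (hf : IsSemiMult f) (hh : IsSemiMult h) :
    IsSemiMult (dirichlet f h) := by
  obtain ⟨c, a, G, hc, ha, hG, hfG⟩ := isSemiMult_iff.mp hf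
  obtain ⟨d, b, K, hd, hb, hK, hhK⟩ := isSemiMult_iff.mp hh
  refine isSemiMult_iff.mpr
    ⟨c * d, a * b, G * K, mul_ne_zero hc hd, Nat.mul_pos ha hb, hG.mul hK, ?_⟩
  rw [ofFun_dirichlet, hfG, hhK, mul_mul_mul_comm, single_mul_single]
end

section
/- An arithmetical function f : ℕ^u → ℂ of u variables, not identically zero, is semimultiplicative if and only if there exist positive integers a₁,…,a_u such that f(a₁,…,a_u) ≠ 0, f(n₁,…,n_u) = 0 whenever a_i ∤ n_i for some i, and f(a₁,…,a_u)·f(a₁m₁n₁,…,a_u m_u n_u) = f(a₁m₁,…,a_u m_u)·f(a₁n₁,…,a_u n_u) whenever gcd(n₁⋯n_u, m₁⋯m_u) = 1. -/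
open scoped Classical

/-- A function of `u` variables is multiplicative if `g (1,…,1) = 1` and
`g (n₁m₁,…,n_um_u) = g n * g m` whenever `gcd (∏ nᵢ) (∏ mᵢ) = 1`. -/
def IsMultU {u : ℕ} (g : (Fin u → ℕ) → ℂ) : Prop :=
  g (fun _ => 1) = 1 ∧ ∀ n m : Fin u → ℕ, (∀ i, 0 < n i) → (∀ i, 0 < m i) →
    Nat.Coprime (∏ i, n i) (∏ i, m i) →
      g (fun i => n i * m i) = g n * g m

/-- A function of `u` variables is semimultiplicative if
`f n = c * g (n₁/a₁, …, n_u/a_u)` for a nonzero constant `c`, positive integers `aᵢ`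
and a multiplicative `g`, the value being `0` when some `aᵢ ∤ nᵢ`. -/
def IsSemiMultU {u : ℕ} (f : (Fin u → ℕ) → ℂ) : Prop :=
  ∃ (c : ℂ) (a : Fin u → ℕ) (g : (Fin u → ℕ) → ℂ), c ≠ 0 ∧ (∀ i, 0 < a i) ∧ IsMultU g ∧
    ∀ n : Fin u → ℕ, (∀ i, 0 < n i) →
      f n = c * (if ∀ i, a i ∣ n i then g (fun i => n i / a i) else 0)

/-!
If `f n = c · g (n / a)` with `g` multiplicative, then `f` is supported on multiples of `a`,
`f a = c`, and `f (a m) = c · g m`, so the multiplicativity of `g` is exactly the identity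
`f a · f (a m n) = f (a m) · f (a n)` for coprime `m, n`. Conversely, given such an `a`,
the function `g m := f (a m) / f a` is multiplicative and recovers `f` with `c = f a`.
-/

section

variable {u : ℕ} {f g : (Fin u → ℕ) → ℂ} {c : ℂ} {a : Fin u → ℕ}

def IsSemiMultUWithBase (f : (Fin u → ℕ) → ℂ) (a : Fin u → ℕ) : Prop :=
  (∀ i, 0 < a i) ∧ f a ≠ 0 ∧
    (∀ n : Fin u → ℕ, (∀ i, 0 < n i) → (∃ i, ¬ a i ∣ n i) → f n = 0) ∧
    (∀ m n : Fin u → ℕ, (∀ i, 0 < m i) → (∀ i, 0 < n i) →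
      Nat.Coprime (∏ i, n i) (∏ i, m i) →
        f a * f (fun i => a i * m i * n i) = f (fun i => a i * m i) * f (fun i => a i * n i))

lemma apply_mul_eq_of_forall_eq (ha : ∀ i, 0 < a i)
    (hf : ∀ n : Fin u → ℕ, (∀ i, 0 < n i) →
      f n = c * (if ∀ i, a i ∣ n i then g (fun i => n i / a i) else 0))
    {k : Fin u → ℕ} (hk : ∀ i, 0 < k i) :
    f (fun i => a i * k i) = c * g k := by
  rw [hf _ fun i => Nat.mul_pos (ha i) (hk i), if_pos fun i => dvd_mul_right (a i) (k i)]
  simp only [Nat.mul_div_cancel_left _ (ha _)]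

lemma IsSemiMultU.exists_isSemiMultUWithBase (h : IsSemiMultU f) :
    ∃ a, IsSemiMultUWithBase f a := by
  obtain ⟨c, a, g, hc, ha, ⟨hg_one, hg_mul⟩, hf⟩ := h
  have hf_mul : ∀ k : Fin u → ℕ, (∀ i, 0 < k i) → f (fun i => a i * k i) = c * g k :=
    fun k hk => apply_mul_eq_of_forall_eq ha hf hk
  have hfa : f a = c := by
    simpa only [mul_one, hg_one] using hf_mul (fun _ => 1) fun _ => one_pos
  refine ⟨a, ha, hfa ▸ hc, fun n hn ⟨i, hi⟩ => ?_, fun m n hm hn hmn => ?_⟩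
  · rw [hf n hn, if_neg fun h => hi (h i), mul_zero]
  · have hmul : ∀ i, 0 < m i * n i := fun i => Nat.mul_pos (hm i) (hn i)
    simp only [mul_assoc]
    rw [hfa, hf_mul _ hmul, hf_mul m hm, hf_mul n hn, hg_mul m n hm hn hmn.symm]
    ring

namespace IsSemiMultUWithBase

lemma isMultU (h : IsSemiMultUWithBase f a) :
    IsMultU fun n => f (fun i => a i * n i) / f a := by
  obtain ⟨-, hfa, -, hf_mul⟩ := h
  refine ⟨by simp only [mul_one, div_self hfa], fun n m hn hm hnm => ?_⟩
  have := hf_mul m n hm hn hnm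
  simp only [mul_comm (n _) (m _), ← mul_assoc]
  field_simp
  linear_combination this

lemma isSemiMultU (h : IsSemiMultUWithBase f a) : IsSemiMultU f := by
  have hg := h.isMultU
  obtain ⟨ha, hfa, hf_zero, -⟩ := h
  refine ⟨f a, a, _, hfa, ha, hg, fun n hn => ?_⟩
  split_ifs with hdvd
  · simp only [Nat.mul_div_cancel' (hdvd _), mul_div_cancel₀ _ hfa]
  · rw [mul_zero, hf_zero n hn (not_forall.mp hdvd)]

end IsSemiMultUWithBase

end

theorem semimultU_iff_general {u : ℕ} (f : (Fin u → ℕ) → ℂ) :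
    IsSemiMultU f ↔ ∃ a : Fin u → ℕ, (∀ i, 0 < a i) ∧ f a ≠ 0 ∧
      (∀ n : Fin u → ℕ, (∀ i, 0 < n i) → (∃ i, ¬ a i ∣ n i) → f n = 0) ∧
      (∀ m n : Fin u → ℕ, (∀ i, 0 < m i) → (∀ i, 0 < n i) →
        Nat.Coprime (∏ i, n i) (∏ i, m i) →
          f a * f (fun i => a i * m i * n i) =
            f (fun i => a i * m i) * f (fun i => a i * n i)) :=
  ⟨IsSemiMultU.exists_isSemiMultUWithBase, fun ⟨_, h⟩ => IsSemiMultUWithBase.isSemiMultU h⟩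

theorem semimultU_iff {u : ℕ} (f : (Fin u → ℕ) → ℂ)
    (hf : ∃ n : Fin u → ℕ, (∀ i, 0 < n i) ∧ f n ≠ 0) :
    IsSemiMultU f ↔ ∃ a : Fin u → ℕ, (∀ i, 0 < a i) ∧ f a ≠ 0 ∧
      (∀ n : Fin u → ℕ, (∀ i, 0 < n i) → (∃ i, ¬ a i ∣ n i) → f n = 0) ∧
      (∀ m n : Fin u → ℕ, (∀ i, 0 < m i) → (∀ i, 0 < n i) →
        Nat.Coprime (∏ i, n i) (∏ i, m i) →
          f a * f (fun i => a i * m i * n i) =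
            f (fun i => a i * m i) * f (fun i => a i * n i)) :=
  semimultU_iff_general f
end

section
/- Every semimultiplicative function f : ℕ^u → ℂ of u variables is Selberg multiplicative: with a₁,…,a_u as in the definition and f(a₁,…,a_u) ≠ 0, f(n₁,…,n_u) = f(a₁,…,a_u)·∏_p ( f(a₁p^{ν_p(n₁)−ν_p(a₁)},…,a_u p^{ν_p(n_u)−ν_p(a_u)}) / f(a₁,…,a_u) ), where a factor is 0 if some exponent is negative. -/
/-!
Write `f n = c · [a ∣ n] · g (n / a)` with `g` multiplicative. Splitting `n / a` into its
prime-power parts, `g (n / a)` is the product over `p` of `g (p ^ (ν_p n - ν_p a))`, and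
`a ∣ n` fails exactly when `ν_p a > ν_p n` for some `p`, which kills the factor at `p`.
Since `f a = c`, each local factor is `f (a p ^ (ν_p n - ν_p a)) / f a`; it depends only on
`ν_p n`, and is `1` for primes dividing no `aᵢ`, `nᵢ`. The constant `f a` is then absorbed
into the factor at `p = 2` to get a Selberg factorisation.
-/

open scoped Classical

/-- A function of `u` variables is Selberg multiplicative:
`f n = ∏_p F_p (ν_p n₁, …, ν_p n_u)` where `F_p (0,…,0) = 1` for all but
finitely many primes `p`. -/
def IsSelbergMultU {u : ℕ} (f : (Fin u → ℕ) → ℂ) : Prop :=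
  ∃ F : ℕ → (Fin u → ℕ) → ℂ, {p : ℕ | p.Prime ∧ F p (fun _ => 0) ≠ 1}.Finite ∧
    ∀ n : Fin u → ℕ, (∀ i, 0 < n i) →
      f n = ∏ᶠ (p : ℕ) (_ : p.Prime), F p (fun i => (n i).factorization p)

section PrimeSupport

variable {u : ℕ}

def primeSupport (n : Fin u → ℕ) : Finset ℕ :=
  Finset.univ.biUnion fun i => (n i).primeFactors

theorem primeFactors_subset_primeSupport (n : Fin u → ℕ) (i : Fin u) :
    (n i).primeFactors ⊆ primeSupport n :=
  Finset.subset_biUnion_of_mem (fun i => (n i).primeFactors) (Finset.mem_univ i)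

theorem prime_of_mem_primeSupport {n : Fin u → ℕ} {p : ℕ} (hp : p ∈ primeSupport n) :
    p.Prime := by
  obtain ⟨i, -, hi⟩ := Finset.mem_biUnion.1 hp
  exact Nat.prime_of_mem_primeFactors hi

theorem factorization_eq_zero_of_notMem_primeSupport {n : Fin u → ℕ} {p : ℕ}
    (hp : p ∉ primeSupport n) (i : Fin u) : (n i).factorization p = 0 :=
  Finsupp.notMem_support_iff.1 fun h =>
    hp (primeFactors_subset_primeSupport n i (by rwa [← Nat.support_factorization]))

end PrimeSupport

theorem isSelbergMultU_of_eq_mul_finprod {u : ℕ} {f : (Fin u → ℕ) → ℂ} (C : ℂ)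
    (L : ℕ → (Fin u → ℕ) → ℂ) (hL : {p : ℕ | p.Prime ∧ L p (fun _ => 0) ≠ 1}.Finite)
    (hf : ∀ n : Fin u → ℕ, (∀ i, 0 < n i) →
      f n = C * ∏ᶠ (p : ℕ) (_ : p.Prime), L p (fun i => (n i).factorization p)) :
    IsSelbergMultU f := by
  refine ⟨fun p k => (if p = 2 then C else 1) * L p k, ?_, fun n hn => ?_⟩
  · refine (hL.insert 2).subset fun p ⟨hp, hne⟩ => ?_
    by_cases h2 : p = 2
    · exact Or.inl h2
    · exact Or.inr ⟨hp, by simpa [h2] using hne⟩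
  · have hC : ∏ᶠ (p : ℕ) (_ : p.Prime), (if p = 2 then C else 1) = C := by
      rw [finprod_eq_single _ 2 fun p hp => by simp [hp]]
      simp [Nat.prime_two]
    have hC_finite : ({p : ℕ | p.Prime} ∩
        Function.mulSupport fun p => if p = 2 then C else 1).Finite :=
      (Set.finite_singleton 2).subset fun p ⟨_, hne⟩ => by_contra fun h2 => hne (if_neg h2)
    have hL_finite : ({p : ℕ | p.Prime} ∩
        Function.mulSupport fun p => L p fun i => (n i).factorization p).Finite := by
      refine (hL.union (primeSupport n).finite_toSet).subset fun p ⟨hp, hne⟩ => ?_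
      by_contra hmem
      simp only [Set.mem_union, Finset.mem_coe, not_or] at hmem
      have hν : (fun i => (n i).factorization p) = fun _ => 0 :=
        funext (factorization_eq_zero_of_notMem_primeSupport hmem.2)
      exact hmem.1 ⟨hp, by simpa [hν] using hne⟩
    rw [hf n hn]
    nth_rw 1 [← hC]
    exact (finprod_mem_mul_distrib' hC_finite hL_finite).symm

namespace IsMultU

variable {u : ℕ} {g : (Fin u → ℕ) → ℂ}

theorem map_prod (hg : IsMultU g) {ι : Type*} (s : Finset ι) (x : ι → Fin u → ℕ)
    (hx : ∀ j ∈ s, ∀ i, 0 < x j i)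
    (hcop : (s : Set ι).Pairwise fun j k => Nat.Coprime (∏ i, x j i) (∏ i, x k i)) :
    g (fun i => ∏ j ∈ s, x j i) = ∏ j ∈ s, g (x j) := by
  induction s using Finset.induction_on with
  | empty => simpa using hg.1
  | @insert j s hj ih =>
    have hcop_js : Nat.Coprime (∏ i, x j i) (∏ i, ∏ k ∈ s, x k i) := by
      rw [Finset.prod_comm]
      exact Nat.Coprime.prod_right fun k hk =>
        hcop (by simp) (by simp [hk]) (ne_of_mem_of_not_mem hk hj).symm
    simp only [Finset.prod_insert hj]
    rw [hg.2 _ _ (hx j (by simp)) (fun i => Finset.prod_pos fun k hk => hx k (by simp [hk]) i)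
      hcop_js, ih (fun k hk => hx k (by simp [hk])) (hcop.mono (by simp))]

theorem map_eq_prod_primePow (hg : IsMultU g) {m : Fin u → ℕ} (hm : ∀ i, 0 < m i)
    {S : Finset ℕ} (hS : ∀ p ∈ S, p.Prime) (hmS : ∀ i, (m i).primeFactors ⊆ S) :
    g m = ∏ p ∈ S, g (fun i => p ^ (m i).factorization p) := by
  have hm_eq : (fun i => ∏ p ∈ S, p ^ (m i).factorization p) = m := funext fun i => by
    rw [← Finsupp.prod_of_support_subset _ (by simpa using hmS i) _ (by simp)]
    exact Nat.prod_factorization_pow_eq_self (hm i).ne'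
  rw [← map_prod hg, hm_eq]
  · exact fun p hp i => pow_pos (hS p hp).pos _
  · intro p hp q hq hpq
    simp only [Finset.prod_pow_eq_pow_sum]
    exact Nat.Coprime.pow _ _ ((Nat.coprime_primes (hS p hp) (hS q hq)).2 hpq)

theorem ite_dvd_map_div_eq_prod (hg : IsMultU g) {a n : Fin u → ℕ} (ha : ∀ i, 0 < a i)
    (hn : ∀ i, 0 < n i) {S : Finset ℕ} (hS : ∀ p ∈ S, p.Prime)
    (haS : ∀ i, (a i).primeFactors ⊆ S) (hnS : ∀ i, (n i).primeFactors ⊆ S) :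
    (if ∀ i, a i ∣ n i then g (fun i => n i / a i) else 0) =
      ∏ p ∈ S, if ∀ i, (a i).factorization p ≤ (n i).factorization p then
        g (fun i => p ^ ((n i).factorization p - (a i).factorization p)) else 0 := by
  have hdvd_iff : ∀ i, a i ∣ n i ↔ (a i).factorization ≤ (n i).factorization := fun i =>
    (Nat.factorization_le_iff_dvd (ha i).ne' (hn i).ne').symm
  by_cases hdvd : ∀ i, a i ∣ n i
  · have hq : ∀ i, 0 < n i / a i := fun i => Nat.div_pos (Nat.le_of_dvd (hn i) (hdvd i)) (ha i)
    have hqS : ∀ i, (n i / a i).primeFactors ⊆ S := fun i =>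
      (Nat.primeFactors_mono (Nat.div_dvd_of_dvd (hdvd i)) (hn i).ne').trans (hnS i)
    rw [if_pos hdvd, hg.map_eq_prod_primePow hq hS hqS]
    refine Finset.prod_congr rfl fun p _ => ?_
    simp only [Nat.factorization_div (hdvd _), Finsupp.tsub_apply,
      if_pos fun i => (hdvd_iff i).1 (hdvd i) p]
  · obtain ⟨j, hj⟩ := not_forall.1 hdvd
    obtain ⟨p, hpa, hp⟩ : ∃ p ∈ (a j).factorization.support,
        (n j).factorization p < (a j).factorization p := by
      simpa only [hdvd_iff, Finsupp.le_iff, not_forall, not_le, exists_prop] using hj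
    have hpS : p ∈ S := haS j (by rwa [← Nat.support_factorization])
    rw [if_neg hdvd]
    exact (Finset.prod_eq_zero hpS (if_neg fun h => (h j).not_gt hp)).symm

end IsMultU

section Semimultiplicative

variable {u : ℕ} {f : (Fin u → ℕ) → ℂ} {c : ℂ} {a : Fin u → ℕ} {g : (Fin u → ℕ) → ℂ}

theorem semimult_apply_base (ha : ∀ i, 0 < a i) (hg : IsMultU g)
    (hfg : ∀ n : Fin u → ℕ, (∀ i, 0 < n i) →
      f n = c * (if ∀ i, a i ∣ n i then g (fun i => n i / a i) else 0)) :
    f a = c := by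
  simp [hfg a ha, Nat.div_self (ha _), hg.1]

theorem semimult_eq_mul_finprod (hc : c ≠ 0) (ha : ∀ i, 0 < a i) (hg : IsMultU g)
    (hfg : ∀ n : Fin u → ℕ, (∀ i, 0 < n i) →
      f n = c * (if ∀ i, a i ∣ n i then g (fun i => n i / a i) else 0))
    (n : Fin u → ℕ) (hn : ∀ i, 0 < n i) :
    f n = f a * ∏ᶠ (p : ℕ) (_ : p.Prime),
      (if ∀ i, (a i).factorization p ≤ (n i).factorization p then
        f (fun i => a i * p ^ ((n i).factorization p - (a i).factorization p)) / f a
      else 0) := by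
  have hfa : f a = c := semimult_apply_base ha hg hfg
  have hf_primePow : ∀ p, p.Prime → ∀ d : Fin u → ℕ,
      f (fun i => a i * p ^ d i) / f a = g (fun i => p ^ d i) := by
    intro p hp d
    rw [hfg _ fun i => Nat.mul_pos (ha i) (pow_pos hp.pos _), if_pos fun i => dvd_mul_right _ _,
      hfa, mul_div_cancel_left₀ _ hc]
    simp only [Nat.mul_div_cancel_left _ (ha _)]
  set S := primeSupport a ∪ primeSupport n
  have hS : ∀ p ∈ S, p.Prime := fun p hp =>
    (Finset.mem_union.1 hp).elim prime_of_mem_primeSupport prime_of_mem_primeSupport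
  rw [hfg n hn, ← hfa, hg.ite_dvd_map_div_eq_prod ha hn hS
      (fun i => (primeFactors_subset_primeSupport a i).trans Finset.subset_union_left)
      (fun i => (primeFactors_subset_primeSupport n i).trans Finset.subset_union_right),
    finprod_cond_eq_prod_of_cond_iff _ (t := S)]
  · refine congrArg _ (Finset.prod_congr rfl fun p hp => ?_)
    split_ifs
    exacts [(hf_primePow p (hS p hp) _).symm, rfl]
  · intro p hne
    refine ⟨fun hp => by_contra fun hpS => hne ?_, hS p⟩
    simp only [S, Finset.mem_union, not_or] at hpS
    simp [factorization_eq_zero_of_notMem_primeSupport hpS.1,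
      factorization_eq_zero_of_notMem_primeSupport hpS.2, hfa, hc]

end Semimultiplicative

theorem semimultU_selberg {u : ℕ} (f : (Fin u → ℕ) → ℂ)
    (c : ℂ) (a : Fin u → ℕ) (g : (Fin u → ℕ) → ℂ)
    (hc : c ≠ 0) (ha : ∀ i, 0 < a i) (hg : IsMultU g)
    (hfg : ∀ n : Fin u → ℕ, (∀ i, 0 < n i) →
      f n = c * (if ∀ i, a i ∣ n i then g (fun i => n i / a i) else 0)) :
    IsSelbergMultU f ∧ f a ≠ 0 ∧
      ∀ n : Fin u → ℕ, (∀ i, 0 < n i) →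
        f n = f a * ∏ᶠ (p : ℕ) (_ : p.Prime),
          (if ∀ i, (a i).factorization p ≤ (n i).factorization p then
            f (fun i => a i * p ^ ((n i).factorization p - (a i).factorization p)) / f a
          else 0) := by
  have hfa : f a ≠ 0 := semimult_apply_base ha hg hfg ▸ hc
  have hformula := semimult_eq_mul_finprod hc ha hg hfg
  refine ⟨isSelbergMultU_of_eq_mul_finprod (f a) (fun p k =>
    if ∀ i, (a i).factorization p ≤ k i then
      f (fun i => a i * p ^ (k i - (a i).factorization p)) / f a else 0) ?_ hformula,
    hfa, hformula⟩
  refine (primeSupport a).finite_toSet.subset fun p ⟨_, hne⟩ => by_contra fun hpS => hne ?_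
  simp [factorization_eq_zero_of_notMem_primeSupport hpS, hfa]
end

section
/- The function f : ℕ² → ℂ defined by f(n₁, n₂) = 0 if both n₁ and n₂ are odd, and f(n₁, n₂) = 1 otherwise, is Selberg multiplicative (as a function of two variables) but not semimultiplicative. -/
open scoped Classical

/-- A function of two variables is multiplicative. -/
def IsMult2 (g : ℕ → ℕ → ℂ) : Prop :=
  g 1 1 = 1 ∧ ∀ n₁ n₂ m₁ m₂ : ℕ, 0 < n₁ → 0 < n₂ → 0 < m₁ → 0 < m₂ →
    Nat.Coprime (n₁ * n₂) (m₁ * m₂) →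
      g (n₁ * m₁) (n₂ * m₂) = g n₁ n₂ * g m₁ m₂

/-- A function of two variables is semimultiplicative. -/
def IsSemiMult2 (f : ℕ → ℕ → ℂ) : Prop :=
  ∃ (c : ℂ) (a₁ a₂ : ℕ) (g : ℕ → ℕ → ℂ), c ≠ 0 ∧ 0 < a₁ ∧ 0 < a₂ ∧ IsMult2 g ∧
    ∀ n₁ n₂ : ℕ, 0 < n₁ → 0 < n₂ →
      f n₁ n₂ = c * (if a₁ ∣ n₁ ∧ a₂ ∣ n₂ then g (n₁ / a₁) (n₂ / a₂) else 0)

/-- A function of two variables is Selberg multiplicative. -/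
def IsSelbergMult2 (f : ℕ → ℕ → ℂ) : Prop :=
  ∃ F : ℕ → ℕ → ℕ → ℂ, {p : ℕ | p.Prime ∧ F p 0 0 ≠ 1}.Finite ∧
    ∀ n₁ n₂ : ℕ, 0 < n₁ → 0 < n₂ →
      f n₁ n₂ = ∏ᶠ (p : ℕ) (_ : p.Prime), F p (n₁.factorization p) (n₂.factorization p)

/-!
The Selberg factorization takes `F₂(a, b) = 0` if `a = b = 0` and `1` otherwise, and `F_p = 1`
for odd `p`. If instead `f(n₁, n₂) = c·g(n₁/a₁, n₂/a₂)`, then `f(1, 2) ≠ 0` and `f(2, 1) ≠ 0` force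
`a₁ = a₂ = 1`, whence `f(1, 1) = c·g(1, 1) = c ≠ 0`, while `f(1, 1) = 0`.
-/

theorem Nat.factorization_two_eq_zero_iff_odd {n : ℕ} (hn : n ≠ 0) :
    n.factorization 2 = 0 ↔ Odd n := by
  simp [Nat.factorization_eq_zero_iff, Nat.prime_two, hn, Nat.odd_iff]

theorem isSelbergMult2_of_forall_eq_factorization {f : ℕ → ℕ → ℂ} {p : ℕ} (hp : p.Prime)
    (G : ℕ → ℕ → ℂ)
    (hf : ∀ n₁ n₂, 0 < n₁ → 0 < n₂ → f n₁ n₂ = G (n₁.factorization p) (n₂.factorization p)) :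
    IsSelbergMult2 f := by
  refine ⟨fun q a b => if q = p then G a b else 1, ?_, fun n₁ n₂ h₁ h₂ => ?_⟩
  · refine (Set.finite_singleton p).subset fun q hq => ?_
    by_contra hqp
    simp_all
  · rw [finprod_eq_single _ p fun q hq => by simp [hq], finprod_eq_if, if_pos hp]
    exact (hf n₁ n₂ h₁ h₂).trans (if_pos rfl).symm

theorem IsSemiMult2.apply_one_one_ne_zero {f : ℕ → ℕ → ℂ} (hf : IsSemiMult2 f) {n m : ℕ}
    (hn : 0 < n) (hm : 0 < m) (h₁ : f 1 n ≠ 0) (h₂ : f m 1 ≠ 0) : f 1 1 ≠ 0 := by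
  obtain ⟨c, a₁, a₂, g, hc, -, -, ⟨hg, -⟩, hfg⟩ := hf
  have ha₁ : a₁ ∣ 1 := by
    by_contra h
    exact h₁ (by simp [hfg 1 n one_pos hn, h])
  have ha₂ : a₂ ∣ 1 := by
    by_contra h
    exact h₂ (by simp [hfg m 1 hm one_pos, h])
  simpa [hfg 1 1 one_pos one_pos, Nat.dvd_one.mp ha₁, Nat.dvd_one.mp ha₂, hg] using hc

theorem selberg_not_semimult_example :
    IsSelbergMult2 (fun n₁ n₂ => if Odd n₁ ∧ Odd n₂ then (0 : ℂ) else 1) ∧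
    ¬ IsSemiMult2 (fun n₁ n₂ => if Odd n₁ ∧ Odd n₂ then (0 : ℂ) else 1) := by
  refine ⟨isSelbergMult2_of_forall_eq_factorization Nat.prime_two
      (fun a b => if a = 0 ∧ b = 0 then 0 else 1) fun n₁ n₂ h₁ h₂ => ?_, fun hf => ?_⟩
  · simp only [Nat.factorization_two_eq_zero_iff_odd h₁.ne',
      Nat.factorization_two_eq_zero_iff_odd h₂.ne']
  · exact hf.apply_one_one_ne_zero two_pos two_pos (by simp [Nat.odd_iff])
      (by simp [Nat.odd_iff]) (by simp)
end

section
/- Let f(n, r) be an arithmetical function of two variables such that for each r ≥ 1 the function n ↦ f(n, r) is r-even (f(n, r) = f(gcd(n, r), r) for all n) and for each n ≥ 1 the function r ↦ f(n, r) is multiplicative. Then f is multiplicative as a function of two variables: f(mn, rs) = f(m, r)·f(n, s) whenever gcd(mr, ns) = 1. -/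
theorem apply_mul_eq_of_even_of_coprime {α : Type*} {g : ℕ → α} {r m n : ℕ}
    (heven : ∀ n : ℕ, 0 < n → g n = g (Nat.gcd n r))
    (hm : 0 < m) (hn : 0 < n) (hnr : Nat.Coprime n r) :
    g (m * n) = g m := by
  rw [heven (m * n) (Nat.mul_pos hm hn), Nat.Coprime.gcd_mul_right_cancel m hnr, ← heven m hm]

theorem even_mult_implies_mult_two_vars_general (f : ℕ → ℕ → ℂ)
    (heven : ∀ r : ℕ, 0 < r → ∀ n : ℕ, 0 < n → f n r = f (Nat.gcd n r) r)
    (hmult : ∀ n : ℕ, 0 < n → ∀ r s : ℕ, 0 < r → 0 < s → Nat.Coprime r s →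
      f n (r * s) = f n r * f n s) :
    ∀ m n r s : ℕ, 0 < m → 0 < n → 0 < r → 0 < s →
      Nat.Coprime (m * r) (n * s) →
        f (m * n) (r * s) = f m r * f n s := by
  intro m n r s hm hn hr hs hcop
  have hrs : Nat.Coprime r s := hcop.coprime_mul_left.coprime_mul_left_right
  have hnr : Nat.Coprime n r := hcop.coprime_mul_left.coprime_mul_right_right.symm
  have hms : Nat.Coprime m s := hcop.coprime_mul_right.coprime_mul_left_right
  have hr_part : f (m * n) r = f m r :=
    apply_mul_eq_of_even_of_coprime (g := (f · r)) (heven r hr) hm hn hnr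
  have hs_part : f (m * n) s = f n s := by
    rw [mul_comm]
    exact apply_mul_eq_of_even_of_coprime (g := (f · s)) (heven s hs) hn hm hms
  rw [hmult (m * n) (Nat.mul_pos hm hn) r s hr hs hrs, hr_part, hs_part]

theorem even_mult_implies_mult_two_vars (f : ℕ → ℕ → ℂ)
    (heven : ∀ r : ℕ, 0 < r → ∀ n : ℕ, 0 < n → f n r = f (Nat.gcd n r) r)
    (hone : ∀ n : ℕ, 0 < n → f n 1 = 1)
    (hmult : ∀ n : ℕ, 0 < n → ∀ r s : ℕ, 0 < r → 0 < s → Nat.Coprime r s →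
      f n (r * s) = f n r * f n s) :
    ∀ m n r s : ℕ, 0 < m → 0 < n → 0 < r → 0 < s →
      Nat.Coprime (m * r) (n * s) →
        f (m * n) (r * s) = f m r * f n s :=
  even_mult_implies_mult_two_vars_general f heven hmult
end

section
/- For Ramanujan's sum and coprime positive integers m, n: c_r(m)·c_r(n) = μ(r)·c_r(mn), where μ is the Möbius function. -/
/-!
With `a = gcd(m, r)` and `b = gcd(n, r)` coprime, `gcd(mn, r) = ab`, so every divisor of `gcd(mn, r)`
is uniquely `de` with `d ∣ a`, `e ∣ b`. Writing `r = dec`, the sums then match term by term through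
`μ(ec) μ(dc) = μ(dec) μ(c)`: both sides vanish unless `c` is coprime to `d` and `e`, and otherwise this
is multiplicativity of `μ`.
-/

open ArithmeticFunction in
/-- Ramanujan's sum `c_r(n) = ∑_{d ∣ gcd(n,r)} d · μ(r/d)`. -/
noncomputable def ramanujan (r n : ℕ) : ℂ :=
  ∑ d ∈ (Nat.gcd n r).divisors, (d : ℂ) * (moebius (r / d) : ℤ)

theorem Nat.Coprime.sum_divisors_mul_eq_sum_sum {M : Type*} [AddCommMonoid M] {a b : ℕ}
    (hab : a.Coprime b) (f : ℕ → M) :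
    ∑ k ∈ (a * b).divisors, f k = ∑ d ∈ a.divisors, ∑ e ∈ b.divisors, f (d * e) := by
  rw [hab.divisors_mul, Finset.sum_map]
  exact (Finset.sum_attach _ fun p => f (p.1 * p.2)).trans (Finset.sum_product _ _ _)

namespace ArithmeticFunction

open scoped Moebius

theorem moebius_eq_zero_of_dvd {a b : ℕ} (hab : a ∣ b) (ha : μ a = 0) : μ b = 0 := by
  contrapose! ha
  exact moebius_ne_zero_iff_squarefree.mpr
    ((moebius_ne_zero_iff_squarefree.mp ha).squarefree_of_dvd hab)

theorem moebius_mul_eq_zero_of_not_coprime {a b : ℕ} (h : ¬ a.Coprime b) : μ (a * b) = 0 :=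
  moebius_eq_zero_of_not_squarefree fun hs => h (Nat.squarefree_mul_iff.mp hs).1

theorem moebius_mul_mul_moebius_mul {d e c : ℕ} (hde : d.Coprime e) :
    μ (e * c) * μ (d * c) = μ (d * e * c) * μ c := by
  by_cases hdc : d.Coprime c
  · by_cases hec : e.Coprime c
    · rw [isMultiplicative_moebius.map_mul_of_coprime hec,
        isMultiplicative_moebius.map_mul_of_coprime hdc,
        isMultiplicative_moebius.map_mul_of_coprime (hdc.mul_left hec),
        isMultiplicative_moebius.map_mul_of_coprime hde]
      ring
    · rw [moebius_mul_eq_zero_of_not_coprime hec,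
        moebius_eq_zero_of_dvd (Dvd.intro_left d (mul_assoc d e c).symm)
          (moebius_mul_eq_zero_of_not_coprime hec)]
      ring
  · rw [moebius_mul_eq_zero_of_not_coprime hdc,
      moebius_eq_zero_of_dvd (mul_dvd_mul_right (dvd_mul_right d e) c)
        (moebius_mul_eq_zero_of_not_coprime hdc)]
    ring

theorem moebius_div_mul_moebius_div {d e r : ℕ} (hde : d.Coprime e) (hr : d * e ∣ r) :
    μ (r / d) * μ (r / e) = μ r * μ (r / (d * e)) := by
  obtain ⟨c, rfl⟩ := hr
  rcases Nat.eq_zero_or_pos d with rfl | hd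
  · simp
  rcases Nat.eq_zero_or_pos e with rfl | he
  · simp
  rw [Nat.div_eq_of_eq_mul_right hd (by ring : d * e * c = d * (e * c)),
    Nat.div_eq_of_eq_mul_right he (by ring : d * e * c = e * (d * c)),
    Nat.mul_div_cancel_left _ (Nat.mul_pos hd he)]
  exact moebius_mul_mul_moebius_mul hde

end ArithmeticFunction

open ArithmeticFunction in
theorem ramanujan_quasimult_general (r m n : ℕ)
    (h : Nat.Coprime m n) :
    ramanujan r m * ramanujan r n = (moebius r : ℤ) * ramanujan r (m * n) := by
  have hab : (m.gcd r).Coprime (n.gcd r) := by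
    simpa only [Nat.gcd_comm] using Nat.Coprime.gcd_both r r h
  have hgcd : (m * n).gcd r = m.gcd r * n.gcd r := by
    rw [Nat.gcd_comm, h.gcd_mul r, Nat.gcd_comm r m, Nat.gcd_comm r n]
  rw [ramanujan, ramanujan, ramanujan, hgcd, hab.sum_divisors_mul_eq_sum_sum, Finset.sum_mul_sum,
    Finset.mul_sum]
  refine Finset.sum_congr rfl fun d hd => ?_
  rw [Finset.mul_sum]
  refine Finset.sum_congr rfl fun e he => ?_
  have hda := Nat.dvd_of_mem_divisors hd
  have heb := Nat.dvd_of_mem_divisors he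
  have hde : d.Coprime e := (hab.coprime_dvd_left hda).coprime_dvd_right heb
  have hder : d * e ∣ r :=
    hde.mul_dvd_of_dvd_of_dvd (hda.trans (Nat.gcd_dvd_right m r)) (heb.trans (Nat.gcd_dvd_right n r))
  have key := congrArg (Int.cast : ℤ → ℂ) (moebius_div_mul_moebius_div hde hder)
  push_cast at key ⊢
  linear_combination (d : ℂ) * e * key

open ArithmeticFunction in
theorem ramanujan_quasimult (r m n : ℕ) (hr : 0 < r) (hm : 0 < m) (hn : 0 < n)
    (h : Nat.Coprime m n) :
    ramanujan r m * ramanujan r n = (moebius r : ℤ) * ramanujan r (m * n) :=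
  ramanujan_quasimult_general r m n h
end
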